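/- Strong duality characterization: a pair (β̄, ᾱ) ∈ ℝ^p × ℝ^n is a saddle point of L if and only if ᾱ maximizes D over ℝ^n (i.e. D(α) ≤ D(ᾱ) for all α ∈ ℝ^n) and P(β̄) = D(ᾱ). -/

import Mathlib

/-!
Completing the square gives `P(β) - L(β, α) = ‖y - Xβ + α‖² / 2`, so `P(β)` is the maximum of
`L(β, ·)`, attained at `α = Xβ - y`. For fixed `α` the Lagrangian separates over the coordinates
of `β`, and `ψ(η)` is the minimum over `b` of `-2λ₂ηb + λ₀[b ≠ 0] + λ₁|b| + λ₂b²`, attained at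
`b = 𝔅(η)`; hence `D(α)` is the minimum of `L(·, α)`, attained at `β(α)`. Once the inner
extrema are attained, saddle points are exactly the pairs realizing strong duality.
-/

noncomputable section

/-- ℓ₀ "norm": number of nonzero entries, as a real number. -/
def zeroNorm {p : ℕ} (β : EuclideanSpace ℝ (Fin p)) : ℝ :=
  ((Finset.univ.filter fun j => β j ≠ 0).card : ℝ)

/-- ℓ₁ norm. -/
def oneNorm {p : ℕ} (β : EuclideanSpace ℝ (Fin p)) : ℝ := ∑ j, |β j|

/-- `X β`, where `x j` is the `j`-th column of `X`. -/
def Xmul {n p : ℕ} (x : Fin p → EuclideanSpace ℝ (Fin n))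
    (β : EuclideanSpace ℝ (Fin p)) : EuclideanSpace ℝ (Fin n) :=
  ∑ j, β j • x j

/-- Primal objective `P(β)`. -/
def Pobj {n p : ℕ} (x : Fin p → EuclideanSpace ℝ (Fin n)) (y : EuclideanSpace ℝ (Fin n))
    (l0 l1 l2 : ℝ) (β : EuclideanSpace ℝ (Fin p)) : ℝ :=
  (1/2) * ‖y - Xmul x β‖^2 + l0 * zeroNorm β + l1 * oneNorm β + l2 * ‖β‖^2

/-- Lagrangian `L(β, α)`. -/
def Lag {n p : ℕ} (x : Fin p → EuclideanSpace ℝ (Fin n)) (y : EuclideanSpace ℝ (Fin n))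
    (l0 l1 l2 : ℝ) (β : EuclideanSpace ℝ (Fin p)) (α : EuclideanSpace ℝ (Fin n)) : ℝ :=
  (inner ℝ α (Xmul x β) : ℝ) - (1/2) * ‖α‖^2 - (inner ℝ y α : ℝ)
    + l0 * zeroNorm β + l1 * oneNorm β + l2 * ‖β‖^2

/-- `η_j(α) = −⟨x_j, α⟩ / (2 λ₂)`. -/
def etav {n p : ℕ} (x : Fin p → EuclideanSpace ℝ (Fin n)) (l2 : ℝ)
    (α : EuclideanSpace ℝ (Fin n)) (j : Fin p) : ℝ :=
  -(inner ℝ (x j) α : ℝ) / (2 * l2)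

/-- Threshold `η₀ = (2√(λ₀λ₂) + λ₁)/(2λ₂)`. -/
def eta0 (l0 l1 l2 : ℝ) : ℝ := (2 * Real.sqrt (l0 * l2) + l1) / (2 * l2)

/-- Scalar function `ψ` appearing in the dual objective. -/
def psi (l0 l1 l2 : ℝ) (t : ℝ) : ℝ :=
  if eta0 l0 l1 l2 ≤ |t| then -l2 * (|t| - l1 / (2 * l2))^2 + l0 else 0

/-- Dual objective `D(α)` for the square loss. -/
def Dobj {n p : ℕ} (x : Fin p → EuclideanSpace ℝ (Fin n)) (y : EuclideanSpace ℝ (Fin n))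
    (l0 l1 l2 : ℝ) (α : EuclideanSpace ℝ (Fin n)) : ℝ :=
  -(1/2) * ‖α‖^2 - (inner ℝ y α : ℝ) + ∑ j : Fin p, psi l0 l1 l2 (etav x l2 α j)

/-- Thresholding map `𝔅`. -/
def Bth (l0 l1 l2 : ℝ) (t : ℝ) : ℝ :=
  if eta0 l0 l1 l2 ≤ |t| then Real.sign t * (|t| - l1 / (2 * l2)) else 0

/-- Primal-dual link `β(α)` with entries `β_j(α) = 𝔅(η_j(α))`. -/
def betaOf {n p : ℕ} (x : Fin p → EuclideanSpace ℝ (Fin n)) (l0 l1 l2 : ℝ)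
    (α : EuclideanSpace ℝ (Fin n)) : EuclideanSpace ℝ (Fin p) :=
  WithLp.toLp 2 (fun j => Bth l0 l1 l2 (etav x l2 α j))

/-- `(β̄, ᾱ)` is a saddle point of the Lagrangian `L`. -/
def IsSaddle {n p : ℕ} (x : Fin p → EuclideanSpace ℝ (Fin n)) (y : EuclideanSpace ℝ (Fin n))
    (l0 l1 l2 : ℝ) (βb : EuclideanSpace ℝ (Fin p)) (αb : EuclideanSpace ℝ (Fin n)) : Prop :=
  (∀ α, Lag x y l0 l1 l2 βb α ≤ Lag x y l0 l1 l2 βb αb) ∧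
  (∀ β, Lag x y l0 l1 l2 βb αb ≤ Lag x y l0 l1 l2 β αb)

open Set

theorem saddle_iff_of_isGreatest_of_isLeast {B A R : Type*} [PartialOrder R]
    (L : B → A → R) (P : B → R) (D : A → R)
    (hP : ∀ β, IsGreatest (range (L β)) (P β)) (hD : ∀ α, IsLeast (range fun β => L β α) (D α))
    (βb : B) (αb : A) :
    ((∀ α, L βb α ≤ L βb αb) ∧ ∀ β, L βb αb ≤ L β αb) ↔
      (∀ α, D α ≤ D αb) ∧ P βb = D αb := by
  have le_P β α : L β α ≤ P β := (hP β).2 ⟨α, rfl⟩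
  have D_le β α : D α ≤ L β α := (hD α).2 ⟨β, rfl⟩
  constructor
  · rintro ⟨hmax, hmin⟩
    obtain ⟨α₀, hα₀⟩ := (hP βb).1
    obtain ⟨β₀, hβ₀⟩ := (hD αb).1
    have hPL : P βb = L βb αb := le_antisymm (hα₀ ▸ hmax α₀) (le_P βb αb)
    have hLD : L βb αb = D αb := le_antisymm (hβ₀ ▸ hmin β₀) (D_le βb αb)
    exact ⟨fun α => (D_le βb α).trans ((hmax α).trans hLD.le), hPL.trans hLD⟩
  · rintro ⟨-, heq⟩
    have hLP : L βb αb = P βb := le_antisymm (le_P βb αb) (heq ▸ D_le βb αb)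
    exact ⟨fun α => hLP ▸ le_P βb α, fun β => hLP ▸ heq ▸ D_le β αb⟩

def coordPenalty (l0 l1 l2 b : ℝ) : ℝ := (if b = 0 then 0 else l0) + l1 * |b| + l2 * b ^ 2

section Scalar

variable {l0 l1 l2 : ℝ}

theorem eta0_le_abs_iff (hl2 : 0 < l2) (t : ℝ) :
    eta0 l0 l1 l2 ≤ |t| ↔ √(l0 * l2) ≤ l2 * (|t| - l1 / (2 * l2)) := by
  rw [eta0, div_le_iff₀ (by positivity)]
  constructor <;> intro h <;> field_simp at h ⊢ <;> linarith

theorem psi_nonpos (hl0 : 0 ≤ l0) (hl2 : 0 < l2) (t : ℝ) : psi l0 l1 l2 t ≤ 0 := by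
  rw [psi]
  split_ifs with ht
  · rw [eta0_le_abs_iff hl2] at ht
    have hs : √(l0 * l2) ^ 2 = l0 * l2 := Real.sq_sqrt (by positivity)
    have key : l2 * (-l2 * (|t| - l1 / (2 * l2)) ^ 2 + l0) ≤ l2 * 0 := by
      nlinarith [mul_le_mul ht ht (Real.sqrt_nonneg _) ((Real.sqrt_nonneg _).trans ht)]
    exact le_of_mul_le_mul_left key hl2
  · exact le_rfl

theorem psi_le (hl0 : 0 ≤ l0) (hl2 : 0 < l2) (t b : ℝ) :
    psi l0 l1 l2 t ≤ -2 * l2 * t * b + coordPenalty l0 l1 l2 b := by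
  by_cases hb : b = 0
  · simpa [hb, coordPenalty] using psi_nonpos hl0 hl2 t
  have htb := mul_le_mul_of_nonneg_left ((le_abs_self (t * b)).trans (abs_mul t b).le)
    (by positivity : (0 : ℝ) ≤ 2 * l2)
  have hc : l1 * |b| = 2 * l2 * (l1 / (2 * l2)) * |b| := by field_simp
  rw [psi, coordPenalty, if_neg hb, ← sq_abs b]
  set c := l1 / (2 * l2)
  split_ifs with ht
  · -- the gap is `λ₂(|b| - (|t| - c))² + 2λ₂(|t||b| - tb)`
    nlinarith [mul_nonneg hl2.le (sq_nonneg (|b| - |t| + c))]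
  · -- multiplied by `λ₂`, the right-hand side is at least `(λ₂|b| - √(λ₀λ₂))²`
    rw [eta0_le_abs_iff hl2, not_le] at ht
    have hs : √(l0 * l2) ^ 2 = l0 * l2 := Real.sq_sqrt (by positivity)
    have hlt := mul_le_mul_of_nonneg_left ht.le (by positivity : 0 ≤ 2 * l2 * |b|)
    have key : l2 * 0 ≤ l2 * (-2 * l2 * t * b + (l0 + l1 * |b| + l2 * |b| ^ 2)) := by
      nlinarith [sq_nonneg (l2 * |b| - √(l0 * l2)), mul_le_mul_of_nonneg_left htb hl2.le]
    exact le_of_mul_le_mul_left key hl2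

theorem psi_eq_Bth (hl0 : 0 < l0) (hl1 : 0 ≤ l1) (hl2 : 0 < l2) (t : ℝ) :
    psi l0 l1 l2 t = -2 * l2 * t * Bth l0 l1 l2 t + coordPenalty l0 l1 l2 (Bth l0 l1 l2 t) := by
  have hc : l1 = 2 * l2 * (l1 / (2 * l2)) := by field_simp
  simp only [psi, Bth, eta0_le_abs_iff hl2]
  set c := l1 / (2 * l2)
  split_ifs with ht
  · have hd : 0 < |t| - c := by
      have : 0 < √(l0 * l2) := Real.sqrt_pos.2 (by positivity)
      nlinarith
    have ht0 : t ≠ 0 := by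
      rintro rfl
      have : 0 ≤ c := by positivity
      simp only [abs_zero] at hd
      linarith
    rcases ht0.lt_or_gt with hneg | hpos
    · rw [abs_of_neg hneg] at hd ⊢
      rw [Real.sign_of_neg hneg, coordPenalty, if_neg (by linarith), abs_of_neg (by linarith)]
      linear_combination (t + c) * hc
    · rw [abs_of_pos hpos] at hd ⊢
      rw [Real.sign_of_pos hpos, coordPenalty, if_neg (by linarith), abs_of_pos (by linarith)]
      linear_combination (c - t) * hc
  · simp [coordPenalty]

end Scalar

section Lagrangian

variable {n p : ℕ} (x : Fin p → EuclideanSpace ℝ (Fin n)) (y : EuclideanSpace ℝ (Fin n))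
  {l0 l1 l2 : ℝ}

theorem inner_Xmul_eq_sum_etav (hl2 : l2 ≠ 0) (β : EuclideanSpace ℝ (Fin p))
    (α : EuclideanSpace ℝ (Fin n)) :
    inner ℝ α (Xmul x β) = ∑ j, -2 * l2 * etav x l2 α j * β j := by
  rw [Xmul, inner_sum]
  refine Finset.sum_congr rfl fun j _ => ?_
  rw [real_inner_smul_right, real_inner_comm, etav]
  field_simp

theorem sum_coordPenalty (β : EuclideanSpace ℝ (Fin p)) :
    ∑ j, coordPenalty l0 l1 l2 (β j) = l0 * zeroNorm β + l1 * oneNorm β + l2 * ‖β‖ ^ 2 := by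
  simp only [coordPenalty, Finset.sum_add_distrib, zeroNorm, oneNorm,
    EuclideanSpace.real_norm_sq_eq, Finset.mul_sum, Finset.card_filter, Nat.cast_sum]
  congr 2
  exact Finset.sum_congr rfl fun j _ => by split_ifs <;> simp_all

theorem Lag_eq_sum (hl2 : l2 ≠ 0) (β : EuclideanSpace ℝ (Fin p)) (α : EuclideanSpace ℝ (Fin n)) :
    Lag x y l0 l1 l2 β α = -(1 / 2) * ‖α‖ ^ 2 - inner ℝ y α
      + ∑ j, (-2 * l2 * etav x l2 α j * β j + coordPenalty l0 l1 l2 (β j)) := by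
  rw [Finset.sum_add_distrib, sum_coordPenalty, ← inner_Xmul_eq_sum_etav x hl2, Lag]
  ring

theorem Dobj_le_Lag (hl0 : 0 ≤ l0) (hl2 : 0 < l2) (β : EuclideanSpace ℝ (Fin p))
    (α : EuclideanSpace ℝ (Fin n)) : Dobj x y l0 l1 l2 α ≤ Lag x y l0 l1 l2 β α := by
  rw [Lag_eq_sum x y hl2.ne', Dobj]
  gcongr with j
  exact psi_le hl0 hl2 _ _

theorem Lag_betaOf (hl0 : 0 < l0) (hl1 : 0 ≤ l1) (hl2 : 0 < l2) (α : EuclideanSpace ℝ (Fin n)) :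
    Lag x y l0 l1 l2 (betaOf x l0 l1 l2 α) α = Dobj x y l0 l1 l2 α := by
  rw [Lag_eq_sum x y hl2.ne', Dobj]
  congr 1
  exact Finset.sum_congr rfl fun j _ => (psi_eq_Bth hl0 hl1 hl2 _).symm

theorem isLeast_Lag (hl0 : 0 < l0) (hl1 : 0 ≤ l1) (hl2 : 0 < l2) (α : EuclideanSpace ℝ (Fin n)) :
    IsLeast (range fun β => Lag x y l0 l1 l2 β α) (Dobj x y l0 l1 l2 α) :=
  ⟨⟨_, Lag_betaOf x y hl0 hl1 hl2 α⟩, by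
    rintro _ ⟨β, rfl⟩
    exact Dobj_le_Lag x y hl0.le hl2 β α⟩

theorem Pobj_sub_Lag (β : EuclideanSpace ℝ (Fin p)) (α : EuclideanSpace ℝ (Fin n)) :
    Pobj x y l0 l1 l2 β - Lag x y l0 l1 l2 β α = ‖y - Xmul x β + α‖ ^ 2 / 2 := by
  rw [Pobj, Lag, norm_add_sq_real, inner_sub_left, real_inner_comm (Xmul x β)]
  ring

theorem isGreatest_Lag (β : EuclideanSpace ℝ (Fin p)) :
    IsGreatest (range (Lag x y l0 l1 l2 β)) (Pobj x y l0 l1 l2 β) := by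
  refine ⟨⟨Xmul x β - y, (sub_eq_zero.1 ?_).symm⟩, ?_⟩
  · rw [Pobj_sub_Lag, sub_add_sub_cancel', sub_self, norm_zero]
    norm_num
  · rintro _ ⟨α, rfl⟩
    exact sub_nonneg.1 (by rw [Pobj_sub_Lag]; positivity)

end Lagrangian

/-- strong duality characterization of saddle points. -/
theorem stmt9 (n p : ℕ) (x : Fin p → EuclideanSpace ℝ (Fin n))
    (y : EuclideanSpace ℝ (Fin n)) (l0 l1 l2 : ℝ)
    (hl0 : 0 < l0) (hl1 : 0 ≤ l1) (hl2 : 0 < l2)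
    (βb : EuclideanSpace ℝ (Fin p)) (αb : EuclideanSpace ℝ (Fin n)) :
    IsSaddle x y l0 l1 l2 βb αb ↔
      ((∀ α : EuclideanSpace ℝ (Fin n), Dobj x y l0 l1 l2 α ≤ Dobj x y l0 l1 l2 αb) ∧
       Pobj x y l0 l1 l2 βb = Dobj x y l0 l1 l2 αb) :=
  saddle_iff_of_isGreatest_of_isLeast _ _ _ (isGreatest_Lag x y)
    (isLeast_Lag x y hl0 hl1 hl2) βb αb
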